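/- arXiv:1504.05002 — 8 statements merged into one kernel-verified Lean document; each statement's English description precedes it below -/
import Mathlib

section
/- Let g : ℝᵐ → ℝ be σ-strongly convex and continuously differentiable, X ⊆ ℝⁿ convex, E ∈ ℝ^{m×n}, b ∈ ℝⁿ, f(x) = g(Ex) + ⟨b, x⟩, and let x* minimize f over X with t* = E x*. Then for every x ∈ X, (σ/2)·‖Ex − t*‖² ≤ f(x) − f(x*). -/
/-!
The gradient inequality makes `g` `σ`-strongly convex in the chord sense, so along the segment
`xₜ = (1 - t) x* + t x` the function `f` lies below its chord by `(1 - t) t σ/2 ‖E x - E x*‖²`.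
Since `f x* ≤ f xₜ`, dividing by `t` gives `(1 - t) σ/2 ‖E x - E x*‖² ≤ f x - f x*`, and `t → 0`
concludes.
-/

open Set Filter Topology
open scoped InnerProductSpace

theorem strongConvexOn_univ_of_forall_add_inner_le {F : Type*} [NormedAddCommGroup F]
    [InnerProductSpace ℝ F] {σ : ℝ} {g : F → ℝ} (g' : F → F)
    (h : ∀ y z, g z + ⟪g' z, y - z⟫_ℝ + σ / 2 * ‖y - z‖ ^ 2 ≤ g y) :
    StrongConvexOn univ σ g := by
  refine ⟨convex_univ, fun x _ y _ a b _ _ hab => ?_⟩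
  obtain rfl : b = 1 - a := by linarith
  set w := a • x + (1 - a) • y
  have hxw : x - w = (1 - a) • (x - y) := by module
  have hyw : y - w = (-a) • (x - y) := by module
  have hx := h x w
  have hy := h y w
  rw [hxw, real_inner_smul_right, norm_smul, Real.norm_eq_abs, mul_pow, sq_abs] at hx
  rw [hyw, real_inner_smul_right, norm_smul, Real.norm_eq_abs, mul_pow, sq_abs] at hy
  simp only [smul_eq_mul]
  linear_combination a * hx + (1 - a) * hy

theorem le_of_forall_one_sub_mul_le {c d : ℝ} (h : ∀ t ∈ Ioo (0 : ℝ) 1, (1 - t) * c ≤ d) :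
    c ≤ d := by
  have hlim : Tendsto (fun t : ℝ => (1 - t) * c) (𝓝[>] 0) (𝓝 c) := by
    have : Continuous (fun t : ℝ => (1 - t) * c) := by fun_prop
    simpa using (this.tendsto 0).mono_left nhdsWithin_le_nhds
  refine le_of_tendsto hlim ?_
  filter_upwards [Ioo_mem_nhdsGT zero_lt_one] with t ht using h t ht

theorem IsMinOn.le_sub_of_forall_segment_le {V : Type*} [AddCommGroup V] [Module ℝ V]
    {X : Set V} (hX : Convex ℝ X) {φ : V → ℝ} {x₀ x : V} (hmin : IsMinOn φ X x₀)
    (hx₀ : x₀ ∈ X) (hx : x ∈ X) {c : ℝ}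
    (h : ∀ t ∈ Ioo (0 : ℝ) 1,
      φ ((1 - t) • x₀ + t • x) ≤ (1 - t) * φ x₀ + t * φ x - (1 - t) * t * c) :
    c ≤ φ x - φ x₀ := by
  refine le_of_forall_one_sub_mul_le fun t ht => ?_
  have hmem : (1 - t) • x₀ + t • x ∈ X := hX hx₀ hx (by linarith [ht.2]) ht.1.le (by ring)
  have hle := isMinOn_iff.1 hmin _ hmem
  have : t * ((1 - t) * c) ≤ t * (φ x - φ x₀) := by linarith [h t ht]
  exact le_of_mul_le_mul_left this ht.1

theorem stmt_3_general {n m : ℕ} (σ : ℝ)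
    (g : EuclideanSpace ℝ (Fin m) → ℝ)
    (hgsc : ∀ y z : EuclideanSpace ℝ (Fin m),
      g z + ⟪gradient g z, y - z⟫_ℝ + σ / 2 * ‖y - z‖ ^ 2 ≤ g y)
    (X : Set (EuclideanSpace ℝ (Fin n))) (hXconv : Convex ℝ X)
    (E : EuclideanSpace ℝ (Fin n) →L[ℝ] EuclideanSpace ℝ (Fin m))
    (b : EuclideanSpace ℝ (Fin n))
    (f : EuclideanSpace ℝ (Fin n) → ℝ)
    (hf : ∀ x, f x = g (E x) + ⟪b, x⟫_ℝ)
    (xstar : EuclideanSpace ℝ (Fin n)) (hxstar : xstar ∈ X)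
    (hmin : ∀ x ∈ X, f xstar ≤ f x) :
    ∀ x ∈ X, σ / 2 * ‖E x - E xstar‖ ^ 2 ≤ f x - f xstar := by
  intro x hx
  have hg := strongConvexOn_univ_of_forall_add_inner_le (gradient g) hgsc
  refine (isMinOn_iff.2 hmin).le_sub_of_forall_segment_le hXconv hxstar hx fun t ht => ?_
  have hseg := hg.2 (mem_univ (E xstar)) (mem_univ (E x)) (sub_nonneg.2 ht.2.le) ht.1.le
    (sub_add_cancel 1 t)
  simp only [hf, map_add, map_smul, inner_add_right, real_inner_smul_right, smul_eq_mul,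
    norm_sub_rev (E xstar)] at hseg ⊢
  linarith

theorem stmt_3 {n m : ℕ} (σ : ℝ) (hσ : 0 < σ)
    (g : EuclideanSpace ℝ (Fin m) → ℝ) (hgdiff : ContDiff ℝ 1 g)
    (hgsc : ∀ y z : EuclideanSpace ℝ (Fin m),
      g z + ⟪gradient g z, y - z⟫_ℝ + σ / 2 * ‖y - z‖ ^ 2 ≤ g y)
    (X : Set (EuclideanSpace ℝ (Fin n))) (hXconv : Convex ℝ X)
    (E : EuclideanSpace ℝ (Fin n) →L[ℝ] EuclideanSpace ℝ (Fin m))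
    (b : EuclideanSpace ℝ (Fin n))
    (f : EuclideanSpace ℝ (Fin n) → ℝ)
    (hf : ∀ x, f x = g (E x) + ⟪b, x⟫_ℝ)
    (xstar : EuclideanSpace ℝ (Fin n)) (hxstar : xstar ∈ X)
    (hmin : ∀ x ∈ X, f xstar ≤ f x) :
    ∀ x ∈ X, σ / 2 * ‖E x - E xstar‖ ^ 2 ≤ f x - f xstar :=
  stmt_3_general σ g hgsc X hXconv E b f hf xstar hxstar hmin
end

section
/- Under the assumptions of the previous statement with X compact, let f* = f(x*), s* = ⟨b, x*⟩, G = max_{x∈X}‖∇g(Ex)‖, D = diam(X), D_E = diam(EX). Then for every x ∈ X, (⟨b,x⟩ − s*)² ≤ (f(x) − f*)·(‖b‖D + 3GD_E + 2G²/σ). -/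
open scoped InnerProductSpace

/-!
Write `Δ = f x - f x*`, `r = ‖E x - E x*‖`, and split `Δ = a + s` with `a = g (E x) - g (E x*)`
and `s = ⟪b, x⟫ - ⟪b, x*⟫`. Strong convexity of `g` at `E x*` combined with first-order
optimality of `x*` gives `σ / 2 * r ^ 2 ≤ Δ`, and convexity of `g` with the gradient bound gives
`|a| ≤ G * r`. Hence `|s| ≤ Δ + G * r`, and squaring,
`s ^ 2 ≤ Δ ^ 2 + 2 * Δ * G * r + G ^ 2 * r ^ 2`, where `Δ ≤ G * D_E + ‖b‖ * D`, `r ≤ D_E` and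
`G ^ 2 * r ^ 2 ≤ 2 * G ^ 2 * Δ / σ`.
-/

open Metric

theorem IsMinOn.hasFDerivAt_nonneg_of_convex {V : Type*} [NormedAddCommGroup V]
    [NormedSpace ℝ V] {f : V → ℝ} {f' : V →L[ℝ] ℝ} {X : Set V} {x₀ x : V}
    (hmin : IsMinOn f X x₀) (hX : Convex ℝ X) (hx₀ : x₀ ∈ X) (hx : x ∈ X)
    (hf : HasFDerivAt f f' x₀) : 0 ≤ f' (x - x₀) :=
  hmin.localize.hasFDerivWithinAt_nonneg hf.hasFDerivWithinAt
    (sub_mem_posTangentConeAt_of_segment_subset (hX.segment_subset hx₀ hx))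

theorem abs_sub_le_of_gradient_norm_le {F : Type*} [NormedAddCommGroup F]
    [InnerProductSpace ℝ F] [CompleteSpace F] {g : F → ℝ}
    (hconv : ∀ y z, g z + ⟪gradient g z, y - z⟫_ℝ ≤ g y) {G : ℝ} {y z : F}
    (hy : ‖gradient g y‖ ≤ G) (hz : ‖gradient g z‖ ≤ G) :
    |g y - g z| ≤ G * ‖y - z‖ := by
  have hinner : ∀ w v : F, ‖w‖ ≤ G → -(G * ‖v‖) ≤ ⟪w, v⟫_ℝ := fun w v hw =>
    neg_le_of_abs_le ((abs_real_inner_le_norm w v).trans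
      (mul_le_mul_of_nonneg_right hw (norm_nonneg v)))
  have hyz := hinner _ (z - y) hy
  rw [norm_sub_rev] at hyz
  rw [abs_le]
  constructor <;> linarith [hconv y z, hconv z y, hinner _ (y - z) hz]

section Composite

variable {V F : Type*} [NormedAddCommGroup V] [InnerProductSpace ℝ V]
  [NormedAddCommGroup F] [InnerProductSpace ℝ F] [CompleteSpace F]
  {g : F → ℝ} {E : V →L[ℝ] F} {b : V} {f : V → ℝ} {X : Set V} {x₀ x : V}

theorem inner_gradient_add_inner_nonneg_of_isMinOn (hg : DifferentiableAt ℝ g (E x₀))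
    (hf : ∀ x, f x = g (E x) + ⟪b, x⟫_ℝ) (hmin : IsMinOn f X x₀) (hX : Convex ℝ X)
    (hx₀ : x₀ ∈ X) (hx : x ∈ X) :
    0 ≤ ⟪gradient g (E x₀), E x - E x₀⟫_ℝ + ⟪b, x - x₀⟫_ℝ := by
  have hderiv : HasFDerivAt f
      ((InnerProductSpace.toDual ℝ F (gradient g (E x₀))).comp E + innerSL ℝ b) x₀ := by
    rw [funext hf]
    exact (hg.hasGradientAt.hasFDerivAt.comp x₀ E.hasFDerivAt).add (innerSL ℝ b).hasFDerivAt
  have h := hmin.hasFDerivAt_nonneg_of_convex hX hx₀ hx hderiv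
  simp only [add_apply, ContinuousLinearMap.comp_apply,
    InnerProductSpace.toDual_apply_apply, innerSL_apply_apply] at h
  rwa [map_sub] at h

theorem half_mul_sq_norm_sub_le_of_isMinOn {σ : ℝ} (hg : DifferentiableAt ℝ g (E x₀))
    (hgsc : ∀ y z, g z + ⟪gradient g z, y - z⟫_ℝ + σ / 2 * ‖y - z‖ ^ 2 ≤ g y)
    (hf : ∀ x, f x = g (E x) + ⟪b, x⟫_ℝ) (hmin : IsMinOn f X x₀) (hX : Convex ℝ X)
    (hx₀ : x₀ ∈ X) (hx : x ∈ X) :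
    σ / 2 * ‖E x - E x₀‖ ^ 2 ≤ f x - f x₀ := by
  have hopt := inner_gradient_add_inner_nonneg_of_isMinOn hg hf hmin hX hx₀ hx
  rw [inner_sub_right b] at hopt
  rw [hf, hf]
  linarith [hgsc (E x) (E x₀)]

end Composite

theorem sq_le_mul_of_gap_split {Δ a s r G R B σ : ℝ} (hσ : 0 < σ) (hG : 0 ≤ G)
    (hsplit : Δ = a + s) (ha : |a| ≤ G * r) (hs : |s| ≤ B) (hr : r ≤ R)
    (hgap : σ / 2 * r ^ 2 ≤ Δ) :
    s ^ 2 ≤ Δ * (B + 3 * G * R + 2 * G ^ 2 / σ) := by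
  have hΔ : 0 ≤ Δ := le_trans (by positivity) hgap
  have ha' := abs_le.1 ha
  have hs' : |s| ≤ Δ + G * r := abs_le.2 ⟨by linarith, by linarith⟩
  have hΔle : Δ ≤ G * R + B := by
    linarith [mul_le_mul_of_nonneg_left hr hG, le_abs_self s]
  have hsq : G ^ 2 * r ^ 2 ≤ 2 * G ^ 2 * Δ / σ := by
    rw [le_div_iff₀ hσ]
    nlinarith [sq_nonneg G]
  calc s ^ 2 ≤ (Δ + G * r) ^ 2 := sq_le_sq' (abs_le.1 hs').1 (abs_le.1 hs').2
    _ = Δ * Δ + 2 * Δ * (G * r) + G ^ 2 * r ^ 2 := by ring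
    _ ≤ Δ * (G * R + B) + 2 * Δ * (G * R) + 2 * G ^ 2 * Δ / σ := by gcongr
    _ = Δ * (B + 3 * G * R + 2 * G ^ 2 / σ) := by ring

theorem stmt_4_general {n m : ℕ} (σ : ℝ) (hσ : 0 < σ)
    (g : EuclideanSpace ℝ (Fin m) → ℝ) (hgdiff : ContDiff ℝ 1 g)
    (hgsc : ∀ y z : EuclideanSpace ℝ (Fin m),
      g z + ⟪gradient g z, y - z⟫_ℝ + σ / 2 * ‖y - z‖ ^ 2 ≤ g y)
    (X : Set (EuclideanSpace ℝ (Fin n)))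
    (hXc : IsCompact X) (hXconv : Convex ℝ X)
    (E : EuclideanSpace ℝ (Fin n) →L[ℝ] EuclideanSpace ℝ (Fin m))
    (b : EuclideanSpace ℝ (Fin n))
    (f : EuclideanSpace ℝ (Fin n) → ℝ)
    (hf : ∀ x, f x = g (E x) + ⟪b, x⟫_ℝ)
    (xstar : EuclideanSpace ℝ (Fin n)) (hxstar : xstar ∈ X)
    (hmin : ∀ x ∈ X, f xstar ≤ f x)
    (G : ℝ) (hG : IsGreatest ((fun x => ‖gradient g (E x)‖) '' X) G) :
    ∀ x ∈ X, (⟪b, x⟫_ℝ - ⟪b, xstar⟫_ℝ) ^ 2 ≤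
      (f x - f xstar) *
        (‖b‖ * Metric.diam X + 3 * G * Metric.diam (E '' X) + 2 * G ^ 2 / σ) := by
  intro x hx
  have hGx : ‖gradient g (E x)‖ ≤ G := hG.2 ⟨x, hx, rfl⟩
  have hconv : ∀ y z, g z + ⟪gradient g z, y - z⟫_ℝ ≤ g y := fun y z => by
    nlinarith [hgsc y z, sq_nonneg ‖y - z‖]
  have hgap := half_mul_sq_norm_sub_le_of_isMinOn (hgdiff.differentiable one_ne_zero _) hgsc hf
    hmin hXconv hxstar hx
  have hlip := abs_sub_le_of_gradient_norm_le hconv hGx (hG.2 ⟨xstar, hxstar, rfl⟩)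
  have hlin : |⟪b, x⟫_ℝ - ⟪b, xstar⟫_ℝ| ≤ ‖b‖ * diam X := by
    rw [← inner_sub_right]
    refine (abs_real_inner_le_norm _ _).trans (mul_le_mul_of_nonneg_left ?_ (norm_nonneg b))
    simpa [dist_eq_norm] using dist_le_diam_of_mem hXc.isBounded hx hxstar
  have hr : ‖E x - E xstar‖ ≤ diam (E '' X) := by
    simpa [dist_eq_norm] using
      dist_le_diam_of_mem (hXc.image E.continuous).isBounded ⟨x, hx, rfl⟩ ⟨xstar, hxstar, rfl⟩
  exact sq_le_mul_of_gap_split hσ ((norm_nonneg _).trans hGx) (by rw [hf, hf]; ring) hlip hlin hr hgap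

theorem stmt_4 {n m : ℕ} (σ : ℝ) (hσ : 0 < σ)
    (g : EuclideanSpace ℝ (Fin m) → ℝ) (hgdiff : ContDiff ℝ 1 g)
    (hgsc : ∀ y z : EuclideanSpace ℝ (Fin m),
      g z + ⟪gradient g z, y - z⟫_ℝ + σ / 2 * ‖y - z‖ ^ 2 ≤ g y)
    (X : Set (EuclideanSpace ℝ (Fin n)))
    (hXne : X.Nonempty) (hXc : IsCompact X) (hXconv : Convex ℝ X)
    (E : EuclideanSpace ℝ (Fin n) →L[ℝ] EuclideanSpace ℝ (Fin m))
    (b : EuclideanSpace ℝ (Fin n))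
    (f : EuclideanSpace ℝ (Fin n) → ℝ)
    (hf : ∀ x, f x = g (E x) + ⟪b, x⟫_ℝ)
    (xstar : EuclideanSpace ℝ (Fin n)) (hxstar : xstar ∈ X)
    (hmin : ∀ x ∈ X, f xstar ≤ f x)
    (G : ℝ) (hG : IsGreatest ((fun x => ‖gradient g (E x)‖) '' X) G) :
    ∀ x ∈ X, (⟪b, x⟫_ℝ - ⟪b, xstar⟫_ℝ) ^ 2 ≤
      (f x - f xstar) *
        (‖b‖ * Metric.diam X + 3 * G * Metric.diam (E '' X) + 2 * G ^ 2 / σ) :=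
  stmt_4_general σ hσ g hgdiff hgsc X hXc hXconv E b f hf xstar hxstar hmin G hG
end

section
/- Let X = {x ∈ ℝⁿ : Ax ≤ a} be a nonempty compact polyhedron, g σ-strongly convex and C¹, f(x) = g(Ex) + ⟨b,x⟩ with optimal set X* and optimal value f*. Then there exists a constant κ > 0 such that for all x ∈ X, dist(x, X*)² ≤ κ·(f(x) − f*). Moreover one may take κ = θ²·(‖b‖D + 3GD_E + 2(G²+1)/σ), where θ is the Hoffman constant associated with the matrix [Aᵀ, Eᵀ, b]ᵀ, D = diam(X), D_E = diam(EX), G = max_{x∈X}‖∇g(Ex)‖. -/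
/-!
First-order optimality of `xstar` over the convex set `X` gives
`⟪∇g (E x*), E x - E x*⟫ + ⟪b, x - x*⟫ ≥ 0`, so strong convexity of `g` yields
`f x - f x* ≥ σ/2 ‖E x - E x*‖²`. Since `⟪b, x - x*⟫ = (f x - f x*) - (g (E x) - g (E x*))` and the
`g`-difference is at most `G ‖E x - E x*‖`, the square `⟪b, x - x*⟫²` is also bounded by a multiple
of `f x - f x*`. Hoffman's bound turns these two residuals into `dist(x, X*)²`.
-/

open scoped InnerProductSpace

theorem convex_setOf_forall_inner_le {F ι : Type*} [NormedAddCommGroup F] [InnerProductSpace ℝ F]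
    (A : ι → F) (a : ι → ℝ) : Convex ℝ {x | ∀ i, ⟪A i, x⟫_ℝ ≤ a i} := by
  simp_rw [Set.ofPred_forall]
  exact convex_iInter fun i => convex_halfSpace_le (innerₗ F (A i)).isLinear (a i)

theorem IsMinOn.inner_gradient_comp_add_inner_sub_nonneg
    {F H : Type*} [NormedAddCommGroup F] [InnerProductSpace ℝ F]
    [NormedAddCommGroup H] [InnerProductSpace ℝ H] [CompleteSpace H]
    {g : H → ℝ} {E : F →L[ℝ] H} {b : F} {X : Set F} {x₀ x : F}
    (hmin : IsMinOn (fun x => g (E x) + ⟪b, x⟫_ℝ) X x₀) (hX : Convex ℝ X) (hx₀ : x₀ ∈ X)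
    (hx : x ∈ X) (hg : DifferentiableAt ℝ g (E x₀)) :
    0 ≤ ⟪gradient g (E x₀), E x - E x₀⟫_ℝ + (⟪b, x⟫_ℝ - ⟪b, x₀⟫_ℝ) := by
  have hf : HasFDerivAt (fun x => g (E x) + ⟪b, x⟫_ℝ)
      ((fderiv ℝ g (E x₀)).comp E + innerSL ℝ b) x₀ :=
    (hg.hasFDerivAt.comp x₀ E.hasFDerivAt).add (innerSL ℝ b).hasFDerivAt
  have := hmin.localize.hasFDerivWithinAt_nonneg hf.hasFDerivWithinAt
    (sub_mem_posTangentConeAt_of_segment_subset (hX.segment_subset hx₀ hx))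
  rwa [add_apply, ContinuousLinearMap.comp_apply, innerSL_apply_apply, map_sub E, inner_sub_right,
    ← InnerProductSpace.toDual_symm_apply] at this

section StrongConvexity

variable {H : Type*} [NormedAddCommGroup H] [InnerProductSpace ℝ H]

theorem abs_sub_le_of_subgradients {g : H → ℝ} {y z v w : H} {G : ℝ}
    (hz : g z + ⟪v, y - z⟫_ℝ ≤ g y) (hy : g y + ⟪w, z - y⟫_ℝ ≤ g z)
    (hv : ‖v‖ ≤ G) (hw : ‖w‖ ≤ G) : |g y - g z| ≤ G * ‖y - z‖ := by
  have hlow : -(G * ‖y - z‖) ≤ ⟪v, y - z⟫_ℝ :=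
    calc -(G * ‖y - z‖) ≤ -(‖v‖ * ‖y - z‖) := by gcongr
      _ ≤ ⟪v, y - z⟫_ℝ := neg_le_of_abs_le (abs_real_inner_le_norm _ _)
  have hup : -⟪w, z - y⟫_ℝ ≤ G * ‖y - z‖ :=
    calc -⟪w, z - y⟫_ℝ ≤ ‖w‖ * ‖z - y‖ := (neg_le_abs _).trans (abs_real_inner_le_norm _ _)
      _ ≤ G * ‖y - z‖ := by rw [norm_sub_rev]; gcongr
  exact abs_le.mpr ⟨by linarith, by linarith⟩

theorem norm_sub_sq_add_sq_le_of_strongConvex {g : H → ℝ} {g' : H → H} {σ : ℝ} (hσ : 0 < σ)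
    (hsc : ∀ y z, g z + ⟪g' z, y - z⟫_ℝ + σ / 2 * ‖y - z‖ ^ 2 ≤ g y) {y z : H}
    {β G Db Dy : ℝ} (hopt : 0 ≤ ⟪g' z, y - z⟫_ℝ + β) (hGy : ‖g' y‖ ≤ G) (hGz : ‖g' z‖ ≤ G)
    (hβ : |β| ≤ Db) (hyz : ‖y - z‖ ≤ Dy) :
    ‖y - z‖ ^ 2 + β ^ 2 ≤ (Db + 3 * G * Dy + 2 * (G ^ 2 + 1) / σ) * (g y - g z + β) := by
  have hsubgrad : ∀ y z, g z + ⟪g' z, y - z⟫_ℝ ≤ g y := fun y z =>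
    (le_add_of_nonneg_right (by positivity)).trans (hsc y z)
  have hlip := abs_sub_le_of_subgradients (hsubgrad y z) (hsubgrad z y) hGz hGy
  have hgrowth := hsc y z
  set t := g y - g z + β
  set u := ‖y - z‖
  have hG : 0 ≤ G := (norm_nonneg _).trans hGy
  have hDy : 0 ≤ Dy := (norm_nonneg _).trans hyz
  have ht : 0 ≤ t := by
    have : 0 ≤ σ / 2 * u ^ 2 := by positivity
    linarith
  have hu : u ^ 2 ≤ 2 / σ * t := by
    rw [div_mul_eq_mul_div, le_div_iff₀ hσ]; linarith
  have hβt : |β| ≤ t + G * u := by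
    have : |β| ≤ |t| + |g y - g z| := by simpa [t] using abs_sub t (g y - g z)
    rw [abs_of_nonneg ht] at this
    linarith
  have hβsq : β ^ 2 ≤ Db * t + G * Dy * t + G ^ 2 * u ^ 2 :=
    calc β ^ 2 = |β| * |β| := by rw [← sq_abs, sq]
      _ ≤ |β| * t + |β| * (G * u) := by rw [← mul_add]; gcongr
      _ ≤ Db * t + (t + G * u) * (G * u) := by gcongr
      _ ≤ Db * t + G * Dy * t + G ^ 2 * u ^ 2 := by
        nlinarith [mul_le_mul_of_nonneg_left hyz (mul_nonneg hG ht)]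
  have hGDt : 0 ≤ G * Dy * t := mul_nonneg (mul_nonneg hG hDy) ht
  calc u ^ 2 + β ^ 2
      ≤ Db * t + G * Dy * t + (G ^ 2 + 1) * (2 / σ * t) := by
        nlinarith [mul_le_mul_of_nonneg_left hu (sq_nonneg G)]
    _ ≤ (Db + 3 * G * Dy + 2 * (G ^ 2 + 1) / σ) * t := by
      have h : (Db + 3 * G * Dy + 2 * (G ^ 2 + 1) / σ) * t
          = Db * t + G * Dy * t + (G ^ 2 + 1) * (2 / σ * t) + 2 * (G * Dy * t) := by ring
      linarith

end StrongConvexity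

theorem stmt_5_general {n m k : ℕ} (σ : ℝ) (hσ : 0 < σ)
    (A : Fin k → EuclideanSpace ℝ (Fin n)) (a : Fin k → ℝ)
    (X : Set (EuclideanSpace ℝ (Fin n)))
    (hX : X = {x | ∀ i, ⟪A i, x⟫_ℝ ≤ a i})
    (hXc : IsCompact X)
    (g : EuclideanSpace ℝ (Fin m) → ℝ) (hgdiff : ContDiff ℝ 1 g)
    (hgsc : ∀ y z : EuclideanSpace ℝ (Fin m),
      g z + ⟪gradient g z, y - z⟫_ℝ + σ / 2 * ‖y - z‖ ^ 2 ≤ g y)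
    (E : EuclideanSpace ℝ (Fin n) →L[ℝ] EuclideanSpace ℝ (Fin m))
    (b : EuclideanSpace ℝ (Fin n))
    (f : EuclideanSpace ℝ (Fin n) → ℝ)
    (hf : ∀ x, f x = g (E x) + ⟪b, x⟫_ℝ)
    (Xstar : Set (EuclideanSpace ℝ (Fin n)))
    (hXstar : Xstar = {y ∈ X | ∀ x ∈ X, f y ≤ f x})
    (xstar : EuclideanSpace ℝ (Fin n)) (hxstar : xstar ∈ Xstar)
    (G : ℝ) (hG : IsGreatest ((fun x => ‖gradient g (E x)‖) '' X) G)
    -- θ is the Hoffman constant associated with the matrix [Aᵀ, Eᵀ, b]ᵀ: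
    -- dist(x, X ∩ {x : Ex = t*, ⟨b,x⟩ = s*}) ≤ θ‖residual‖ for all x ∈ X
    (θ : ℝ) (hθpos : 0 < θ)
    (hθ : ∀ x ∈ X, Metric.infDist x Xstar ≤
      θ * Real.sqrt (‖E x - E xstar‖ ^ 2 + (⟪b, x⟫_ℝ - ⟪b, xstar⟫_ℝ) ^ 2)) :
    ∃ κ : ℝ, 0 < κ ∧
      κ = θ ^ 2 * (‖b‖ * Metric.diam X + 3 * G * Metric.diam (E '' X) +
        2 * (G ^ 2 + 1) / σ) ∧
      ∀ x ∈ X, Metric.infDist x Xstar ^ 2 ≤ κ * (f x - f xstar) := by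
  obtain ⟨hxX, hmin⟩ : xstar ∈ X ∧ IsMinOn f X xstar := by rwa [hXstar] at hxstar
  have hconv : Convex ℝ X := hX ▸ convex_setOf_forall_inner_le A a
  have hfeq : f = fun x => g (E x) + ⟪b, x⟫_ℝ := funext hf
  have hG0 : 0 ≤ G := by
    obtain ⟨x, -, hx⟩ := hG.1
    exact hx ▸ norm_nonneg _
  refine ⟨_, by positivity, rfl, fun x hx => ?_⟩
  have hβ : |⟪b, x⟫_ℝ - ⟪b, xstar⟫_ℝ| ≤ ‖b‖ * Metric.diam X := by
    rw [← inner_sub_right]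
    refine (abs_real_inner_le_norm _ _).trans ?_
    rw [← dist_eq_norm]
    gcongr
    exact Metric.dist_le_diam_of_mem hXc.isBounded hx hxX
  have hEx : ‖E x - E xstar‖ ≤ Metric.diam (E '' X) := by
    rw [← dist_eq_norm]
    exact Metric.dist_le_diam_of_mem (hXc.image E.continuous).isBounded
      ⟨x, hx, rfl⟩ ⟨xstar, hxX, rfl⟩
  have hopt := (hfeq ▸ hmin).inner_gradient_comp_add_inner_sub_nonneg hconv hxX hx
    (hgdiff.differentiable one_ne_zero _)
  calc Metric.infDist x Xstar ^ 2
      ≤ (θ * Real.sqrt (‖E x - E xstar‖ ^ 2 + (⟪b, x⟫_ℝ - ⟪b, xstar⟫_ℝ) ^ 2)) ^ 2 := by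
        gcongr
        · exact Metric.infDist_nonneg
        · exact hθ x hx
    _ = θ ^ 2 * (‖E x - E xstar‖ ^ 2 + (⟪b, x⟫_ℝ - ⟪b, xstar⟫_ℝ) ^ 2) := by
        rw [mul_pow, Real.sq_sqrt (by positivity)]
    _ ≤ θ ^ 2 * ((‖b‖ * Metric.diam X + 3 * G * Metric.diam (E '' X) + 2 * (G ^ 2 + 1) / σ) *
          (g (E x) - g (E xstar) + (⟪b, x⟫_ℝ - ⟪b, xstar⟫_ℝ))) := by
        gcongr
        exact norm_sub_sq_add_sq_le_of_strongConvex hσ hgsc hopt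
          (hG.2 ⟨x, hx, rfl⟩) (hG.2 ⟨xstar, hxX, rfl⟩) hβ hEx
    _ = _ := by rw [hf, hf]; ring

theorem stmt_5 {n m k : ℕ} (σ : ℝ) (hσ : 0 < σ)
    (A : Fin k → EuclideanSpace ℝ (Fin n)) (a : Fin k → ℝ)
    (X : Set (EuclideanSpace ℝ (Fin n)))
    (hX : X = {x | ∀ i, ⟪A i, x⟫_ℝ ≤ a i})
    (hXne : X.Nonempty) (hXc : IsCompact X)
    (g : EuclideanSpace ℝ (Fin m) → ℝ) (hgdiff : ContDiff ℝ 1 g)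
    (hgsc : ∀ y z : EuclideanSpace ℝ (Fin m),
      g z + ⟪gradient g z, y - z⟫_ℝ + σ / 2 * ‖y - z‖ ^ 2 ≤ g y)
    (E : EuclideanSpace ℝ (Fin n) →L[ℝ] EuclideanSpace ℝ (Fin m))
    (b : EuclideanSpace ℝ (Fin n))
    (f : EuclideanSpace ℝ (Fin n) → ℝ)
    (hf : ∀ x, f x = g (E x) + ⟪b, x⟫_ℝ)
    (Xstar : Set (EuclideanSpace ℝ (Fin n)))
    (hXstar : Xstar = {y ∈ X | ∀ x ∈ X, f y ≤ f x})
    (xstar : EuclideanSpace ℝ (Fin n)) (hxstar : xstar ∈ Xstar)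
    (G : ℝ) (hG : IsGreatest ((fun x => ‖gradient g (E x)‖) '' X) G)
    -- θ is the Hoffman constant associated with the matrix [Aᵀ, Eᵀ, b]ᵀ:
    -- dist(x, X ∩ {x : Ex = t*, ⟨b,x⟩ = s*}) ≤ θ‖residual‖ for all x ∈ X
    (θ : ℝ) (hθpos : 0 < θ)
    (hθ : ∀ x ∈ X, Metric.infDist x Xstar ≤
      θ * Real.sqrt (‖E x - E xstar‖ ^ 2 + (⟪b, x⟫_ℝ - ⟪b, xstar⟫_ℝ) ^ 2)) :
    ∃ κ : ℝ, 0 < κ ∧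
      κ = θ ^ 2 * (‖b‖ * Metric.diam X + 3 * G * Metric.diam (E '' X) +
        2 * (G ^ 2 + 1) / σ) ∧
      ∀ x ∈ X, Metric.infDist x Xstar ^ 2 ≤ κ * (f x - f xstar) :=
  stmt_5_general σ hσ A a X hX hXc g hgdiff hgsc E b f hf Xstar hXstar xstar hxstar G hG θ hθpos hθ
end

section
/- Let X = {x ∈ ℝⁿ : Ax ≤ a} be a nonempty compact polyhedron with vertex set V, let U ⊆ V be nonempty, and let I(U) = {i : A_i v = a_i for all v ∈ U}. Define ζ = min{a_i − A_i v : v ∈ V, i with a_i > A_i v}, φ = max{‖A_i‖ : i ∉ I(V)}, and Ω_X = ζ/φ. If z ∈ ℝⁿ satisfies A_{I(U)} z ≤ 0 and ⟨c, z⟩ > 0, then max_{p∈V, u∈U} ⟨c, p − u⟩ ≥ (Ω_X / |U|) · ⟨c, z⟩ / ‖z‖. -/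
open scoped InnerProductSpace

/-!
Let `x'` be the barycentre of `U` pushed along `z` by `t = ζ / (φ |U| ‖z‖)`. A constraint that is
tight on all of `U` stays satisfied because `A_i z ≤ 0`. Any other constraint is slack by at least
`ζ` at some `u ∈ U`, hence by `ζ / |U|` at the barycentre, while the push raises it by at most
`t ‖A_i‖ ‖z‖ ≤ ζ / |U|`. So `x' ∈ X`, and a vertex `p` maximising `⟪c, ·⟫` over `X` gives
`⟪c, p⟫ ≥ ⟪c, x'⟫ ≥ min_{u ∈ U} ⟪c, u⟫ + t ⟪c, z⟫`.
-/

open Finset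

section KreinMilman

variable {E : Type*} [AddCommGroup E] [Module ℝ E] [TopologicalSpace E] [T2Space E]
  [IsTopologicalAddGroup E] [ContinuousSMul ℝ E] [LocallyConvexSpace ℝ E] {s : Set E}

theorem IsCompact.exists_mem_extremePoints_isMaxOn (hs : IsCompact s) (hne : s.Nonempty)
    (l : StrongDual ℝ E) : ∃ p ∈ s.extremePoints ℝ, IsMaxOn l s p := by
  obtain ⟨x, hxs, hx⟩ := hs.exists_isMaxOn hne l.continuous.continuousOn
  have hexp : IsExposed ℝ s (l.toExposed s) := ContinuousLinearMap.toExposed.isExposed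
  obtain ⟨p, hp⟩ := (hexp.isCompact hs).extremePoints_nonempty ⟨x, hxs, fun y hy => hx hy⟩
  exact ⟨p, hexp.isExtreme.extremePoints_subset_extremePoints hp,
    isMaxOn_iff.2 (extremePoints_subset hp).2⟩

end KreinMilman

variable {E : Type*} [NormedAddCommGroup E] [InnerProductSpace ℝ E]

noncomputable def Finset.mean (U : Finset E) : E := (#U : ℝ)⁻¹ • ∑ u ∈ U, u

theorem inner_mean (w : E) (U : Finset E) : ⟪w, U.mean⟫_ℝ = (∑ u ∈ U, ⟪w, u⟫_ℝ) / #U := by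
  rw [Finset.mean, real_inner_smul_right, inner_sum, inv_mul_eq_div]

theorem inner_mean_le_sub_div_card {w : E} {b ζ : ℝ} {U : Finset E}
    (hU : ∀ u ∈ U, ⟪w, u⟫_ℝ ≤ b) {u₀ : E} (hu₀ : u₀ ∈ U) (hζ : ⟪w, u₀⟫_ℝ ≤ b - ζ) :
    ⟪w, U.mean⟫_ℝ ≤ b - ζ / #U := by
  have hcard : (0 : ℝ) < #U := by exact_mod_cast card_pos.2 ⟨u₀, hu₀⟩
  have hsum : ∑ u ∈ U, ⟪w, u⟫_ℝ ≤ #U * b - ζ := by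
    have hslack : ζ ≤ ∑ u ∈ U, (b - ⟪w, u⟫_ℝ) :=
      (le_sub_comm.1 hζ).trans
        (single_le_sum (f := fun u => b - ⟪w, u⟫_ℝ) (fun u hu => sub_nonneg.2 (hU u hu)) hu₀)
    rw [sum_sub_distrib, sum_const, nsmul_eq_mul] at hslack
    linarith
  rw [inner_mean, div_le_iff₀ hcard, sub_mul, div_mul_cancel₀ _ hcard.ne']
  linarith

theorem exists_inner_le_inner_mean (c : E) {U : Finset E} (hU : U.Nonempty) :
    ∃ u ∈ U, ⟪c, u⟫_ℝ ≤ ⟪c, U.mean⟫_ℝ := by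
  obtain ⟨u, hu, hmin⟩ := U.exists_min_image (fun u => ⟪c, u⟫_ℝ) hU
  have hcard : (0 : ℝ) < #U := by exact_mod_cast card_pos.2 hU
  refine ⟨u, hu, ?_⟩
  rw [inner_mean, le_div_iff₀ hcard, mul_comm, ← nsmul_eq_mul]
  exact card_nsmul_le_sum U _ _ hmin

theorem div_div_norm_mul_inner_le {w z : E} {ζ φ : ℝ} (hζ : 0 ≤ ζ) (hw : ‖w‖ ≤ φ) :
    ζ / φ / ‖z‖ * ⟪w, z⟫_ℝ ≤ ζ := by
  have hφ : 0 ≤ φ := (norm_nonneg w).trans hw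
  calc ζ / φ / ‖z‖ * ⟪w, z⟫_ℝ ≤ ζ / (φ * ‖z‖) * (φ * ‖z‖) := by
        rw [div_div]
        gcongr
        exact (real_inner_le_norm w z).trans (by gcongr)
    _ ≤ ζ := by
        rcases (mul_nonneg hφ (norm_nonneg z)).eq_or_lt with h | h
        · rw [← h, mul_zero]; exact hζ
        · rw [div_mul_cancel₀ _ h.ne']

theorem inner_mean_add_smul_le {ι : Type*} (A : ι → E) (a : ι → ℝ) {U : Finset E}
    (hU : U.Nonempty) (hUX : ∀ u ∈ U, ∀ i, ⟪A i, u⟫_ℝ ≤ a i) {ζ φ : ℝ} (hζ0 : 0 ≤ ζ)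
    (hφ0 : 0 ≤ φ) (hζ : ∀ u ∈ U, ∀ i, ⟪A i, u⟫_ℝ < a i → ζ ≤ a i - ⟪A i, u⟫_ℝ)
    (hφ : ∀ i, ¬(∀ u ∈ U, ⟪A i, u⟫_ℝ = a i) → ‖A i‖ ≤ φ) {z : E}
    (hz : ∀ i, (∀ u ∈ U, ⟪A i, u⟫_ℝ = a i) → ⟪A i, z⟫_ℝ ≤ 0) (i : ι) :
    ⟪A i, U.mean + (ζ / φ / #U / ‖z‖) • z⟫_ℝ ≤ a i := by
  rw [inner_add_right, real_inner_smul_right]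
  by_cases htight : ∀ u ∈ U, ⟪A i, u⟫_ℝ = a i
  · obtain ⟨u₀, hu₀⟩ := hU
    have hmean : ⟪A i, U.mean⟫_ℝ ≤ a i - 0 / #U :=
      inner_mean_le_sub_div_card (hUX · · i) hu₀ (by rw [sub_zero]; exact hUX u₀ hu₀ i)
    have hpush : ζ / φ / #U / ‖z‖ * ⟪A i, z⟫_ℝ ≤ 0 :=
      mul_nonpos_of_nonneg_of_nonpos (by positivity) (hz i htight)
    rw [zero_div, sub_zero] at hmean
    linarith
  · push Not at htight
    obtain ⟨u₀, hu₀, hne⟩ := htight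
    have hslack : ⟪A i, u₀⟫_ℝ < a i := (hUX u₀ hu₀ i).lt_of_ne hne
    have hmean : ⟪A i, U.mean⟫_ℝ ≤ a i - ζ / #U :=
      inner_mean_le_sub_div_card (hUX · · i) hu₀ (by linarith [hζ u₀ hu₀ i hslack])
    have hpush : ζ / φ / #U / ‖z‖ * ⟪A i, z⟫_ℝ ≤ ζ / #U := by
      rw [div_right_comm ζ φ]
      exact div_div_norm_mul_inner_le (by positivity)
        (hφ i fun h => hne (h u₀ hu₀))
    linarith

theorem stmt_7_general {n m : ℕ}
    (A : Fin m → EuclideanSpace ℝ (Fin n)) (a : Fin m → ℝ)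
    (X : Set (EuclideanSpace ℝ (Fin n)))
    (hX : X = {x | ∀ i, ⟪A i, x⟫_ℝ ≤ a i})
    (hXc : IsCompact X)
    (V : Set (EuclideanSpace ℝ (Fin n))) (hV : V = Set.extremePoints ℝ X)
    (U : Finset (EuclideanSpace ℝ (Fin n))) (hUne : U.Nonempty) (hUV : ↑U ⊆ V)
    (ζ φ : ℝ)
    (hζ : IsLeast {r | ∃ v ∈ V, ∃ i, ⟪A i, v⟫_ℝ < a i ∧ r = a i - ⟪A i, v⟫_ℝ} ζ)
    (hφ : IsGreatest {r | ∃ i, ¬(∀ v ∈ V, ⟪A i, v⟫_ℝ = a i) ∧ r = ‖A i‖} φ)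
    (c z : EuclideanSpace ℝ (Fin n))
    (hz : ∀ i, (∀ v ∈ U, ⟪A i, v⟫_ℝ = a i) → ⟪A i, z⟫_ℝ ≤ 0) :
    ∃ p ∈ V, ∃ u ∈ U,
      ζ / φ / (U.card : ℝ) * (⟪c, z⟫_ℝ / ‖z‖) ≤ ⟪c, p - u⟫_ℝ := by
  subst hX hV
  have hUX : ∀ u ∈ U, ∀ i, ⟪A i, u⟫_ℝ ≤ a i := fun u hu => extremePoints_subset (hUV hu)
  have hζ0 : 0 ≤ ζ := by
    obtain ⟨v, -, i, hi, rfl⟩ := hζ.1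
    linarith
  have hφ0 : 0 ≤ φ := by
    obtain ⟨i, -, rfl⟩ := hφ.1
    positivity
  have hx' := inner_mean_add_smul_le A a hUne hUX hζ0 hφ0
    (fun u hu i hi => hζ.2 ⟨u, hUV hu, i, hi, rfl⟩)
    (fun i hi => hφ.2 ⟨i, fun h => hi fun u hu => h u (hUV hu), rfl⟩) hz
  obtain ⟨p, hp, hpmax⟩ := hXc.exists_mem_extremePoints_isMaxOn ⟨_, hx'⟩ (innerSL ℝ c)
  obtain ⟨u, hu, hcu⟩ := exists_inner_le_inner_mean c hUne
  refine ⟨p, hp, u, hu, ?_⟩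
  have hcp := isMaxOn_iff.1 hpmax _ hx'
  simp only [innerSL_apply_apply, inner_add_right, real_inner_smul_right] at hcp
  rw [inner_sub_right]
  have hstep : ζ / φ / #U * (⟪c, z⟫_ℝ / ‖z‖) = ζ / φ / #U / ‖z‖ * ⟪c, z⟫_ℝ := by ring
  linarith

theorem stmt_7 {n m : ℕ}
    (A : Fin m → EuclideanSpace ℝ (Fin n)) (a : Fin m → ℝ)
    (X : Set (EuclideanSpace ℝ (Fin n)))
    (hX : X = {x | ∀ i, ⟪A i, x⟫_ℝ ≤ a i})
    (hXne : X.Nonempty) (hXc : IsCompact X)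
    (V : Set (EuclideanSpace ℝ (Fin n))) (hV : V = Set.extremePoints ℝ X)
    (U : Finset (EuclideanSpace ℝ (Fin n))) (hUne : U.Nonempty) (hUV : ↑U ⊆ V)
    (ζ φ : ℝ)
    (hζ : IsLeast {r | ∃ v ∈ V, ∃ i, ⟪A i, v⟫_ℝ < a i ∧ r = a i - ⟪A i, v⟫_ℝ} ζ)
    (hφ : IsGreatest {r | ∃ i, ¬(∀ v ∈ V, ⟪A i, v⟫_ℝ = a i) ∧ r = ‖A i‖} φ)
    (c z : EuclideanSpace ℝ (Fin n))
    (hz : ∀ i, (∀ v ∈ U, ⟪A i, v⟫_ℝ = a i) → ⟪A i, z⟫_ℝ ≤ 0)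
    (hcz : 0 < ⟪c, z⟫_ℝ) :
    ∃ p ∈ V, ∃ u ∈ U,
      ζ / φ / (U.card : ℝ) * (⟪c, z⟫_ℝ / ‖z‖) ≤ ⟪c, p - u⟫_ℝ :=
  stmt_7_general A a X hX hXc V hV U hUne hUV ζ φ hζ hφ c z hz
end

section
/- In the setting of the vertex-facet distance lemma: if z ∈ ℝⁿ satisfies ⟨c, z⟩ > 0 and A_J z ≤ 0 for J = I(U), then there exists an index i ∉ J with A_i z > 0. Equivalently, the linear program max{⟨c,x⟩ : A_J x ≤ 0, A_{J̄} x ≤ (ζ/|U|)·𝟙} has finite optimal value, since it is bounded above by max_{p∈V,u∈U}⟨c, p−u⟩ < ∞. -/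
/-!
The centroid `p` of `U` satisfies the constraints of `J` with equality and, because some vertex
of `U` has slack at least `ζ` in each constraint outside `J`, satisfies those with slack
at least `ζ / |U|`. Hence `p + x ∈ X` for every feasible point `x` of the linear program, so
`⟪c, x⟫` is bounded by `max_X ⟪c, ·⟫ - ⟪c, p⟫`. If moreover `A_i z ≤ 0` for every `i`, the whole ray
`u + t z` (`u ∈ U`, `t ≥ 0`) would lie in the compact set `X`, contradicting `⟪c, z⟫ > 0`.
-/

open scoped InnerProductSpace
open Filter Finset

theorem Finset.sum_le_card_mul_sub {ι : Type*} {s : Finset ι} {f : ι → ℝ} {b d : ℝ} {i₀ : ι}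
    (hi₀ : i₀ ∈ s) (hf : ∀ i ∈ s, f i ≤ b) (hd : d ≤ b - f i₀) :
    ∑ i ∈ s, f i ≤ #s * b - d := by
  have hgap : b - f i₀ ≤ ∑ i ∈ s, (b - f i) :=
    single_le_sum (fun i hi => sub_nonneg.2 (hf i hi)) hi₀
  rw [sum_sub_distrib, sum_const, nsmul_eq_mul] at hgap
  linarith

section InnerProductSpace

variable {E : Type*} [NormedAddCommGroup E] [InnerProductSpace ℝ E]

theorem inner_nonpos_of_forall_add_smul_mem {S : Set E} {c x z : E}
    (hS : BddAbove ((⟪c, ·⟫_ℝ) '' S)) (hray : ∀ t : ℝ, 0 ≤ t → x + t • z ∈ S) :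
    ⟪c, z⟫_ℝ ≤ 0 := by
  by_contra! hcz
  obtain ⟨M, hM⟩ := hS
  have hlim : Tendsto (fun t : ℝ => ⟪c, x⟫_ℝ + t * ⟪c, z⟫_ℝ) atTop atTop :=
    tendsto_atTop_add_const_left _ _ (tendsto_id.atTop_mul_const hcz)
  obtain ⟨t, ht, hMt⟩ := ((eventually_ge_atTop 0).and (hlim.eventually_gt_atTop M)).exists
  have hle : ⟪c, x + t • z⟫_ℝ ≤ M := hM ⟨_, hray t ht, rfl⟩
  rw [inner_add_right, real_inner_smul_right] at hle
  linarith

theorem inner_inv_card_smul_sum (w : E) (U : Finset E) :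
    ⟪w, (#U : ℝ)⁻¹ • ∑ u ∈ U, u⟫_ℝ = (#U : ℝ)⁻¹ * ∑ u ∈ U, ⟪w, u⟫_ℝ := by
  rw [real_inner_smul_right, inner_sum]

theorem inner_inv_card_smul_sum_eq {w : E} {b : ℝ} {U : Finset E} (hU : U.Nonempty)
    (h : ∀ u ∈ U, ⟪w, u⟫_ℝ = b) : ⟪w, (#U : ℝ)⁻¹ • ∑ u ∈ U, u⟫_ℝ = b := by
  have hcard : (#U : ℝ) ≠ 0 := by exact_mod_cast hU.card_pos.ne'
  rw [inner_inv_card_smul_sum, sum_congr rfl h, sum_const, nsmul_eq_mul,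
    inv_mul_cancel_left₀ hcard]

theorem inner_inv_card_smul_sum_le_sub {w u₀ : E} {b d : ℝ} {U : Finset E} (hu₀ : u₀ ∈ U)
    (hU : ∀ u ∈ U, ⟪w, u⟫_ℝ ≤ b) (hd : d ≤ b - ⟪w, u₀⟫_ℝ) :
    ⟪w, (#U : ℝ)⁻¹ • ∑ u ∈ U, u⟫_ℝ ≤ b - d / #U := by
  have hcard : (0 : ℝ) < #U := by exact_mod_cast card_pos.2 ⟨u₀, hu₀⟩
  rw [inner_inv_card_smul_sum, inv_mul_le_iff₀ hcard, mul_sub, mul_div_cancel₀ _ hcard.ne']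
  exact sum_le_card_mul_sub hu₀ hU hd

end InnerProductSpace

theorem stmt_8_general {n m : ℕ}
    (A : Fin m → EuclideanSpace ℝ (Fin n)) (a : Fin m → ℝ)
    (X : Set (EuclideanSpace ℝ (Fin n)))
    (hX : X = {x | ∀ i, ⟪A i, x⟫_ℝ ≤ a i})
    (hXc : IsCompact X)
    (V : Set (EuclideanSpace ℝ (Fin n))) (hV : V = Set.extremePoints ℝ X)
    (U : Finset (EuclideanSpace ℝ (Fin n))) (hUne : U.Nonempty) (hUV : ↑U ⊆ V)
    (ζ : ℝ)
    (hζ : IsLeast {r | ∃ v ∈ V, ∃ i, ⟪A i, v⟫_ℝ < a i ∧ r = a i - ⟪A i, v⟫_ℝ} ζ)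
    (c z : EuclideanSpace ℝ (Fin n))
    (hz : ∀ i, (∀ v ∈ U, ⟪A i, v⟫_ℝ = a i) → ⟪A i, z⟫_ℝ ≤ 0)
    (hcz : 0 < ⟪c, z⟫_ℝ) :
    (∃ i, ¬(∀ v ∈ U, ⟪A i, v⟫_ℝ = a i) ∧ 0 < ⟪A i, z⟫_ℝ) ∧
      BddAbove {r | ∃ x : EuclideanSpace ℝ (Fin n),
        (∀ i, (∀ v ∈ U, ⟪A i, v⟫_ℝ = a i) → ⟪A i, x⟫_ℝ ≤ 0) ∧
        (∀ i, ¬(∀ v ∈ U, ⟪A i, v⟫_ℝ = a i) → ⟪A i, x⟫_ℝ ≤ ζ / (U.card : ℝ)) ∧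
        r = ⟪c, x⟫_ℝ} := by
  subst hX hV
  have hUX (u) (hu : u ∈ U) (i) : ⟪A i, u⟫_ℝ ≤ a i := extremePoints_subset (hUV hu) i
  have hbdd : BddAbove ((⟪c, ·⟫_ℝ) '' {x | ∀ i, ⟪A i, x⟫_ℝ ≤ a i}) :=
    hXc.bddAbove_image (continuous_const.inner continuous_id).continuousOn
  refine ⟨?_, ?_⟩
  · by_contra! hJc
    obtain ⟨u, hu⟩ := hUne
    refine hcz.not_ge (inner_nonpos_of_forall_add_smul_mem (x := u) hbdd fun t ht i => ?_)
    have hAz : ⟪A i, z⟫_ℝ ≤ 0 := by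
      by_cases hi : ∀ v ∈ U, ⟪A i, v⟫_ℝ = a i
      exacts [hz i hi, hJc i (by simpa using hi)]
    rw [inner_add_right, real_inner_smul_right]
    nlinarith [hUX u hu i]
  · obtain ⟨M, hM⟩ := hbdd
    set p := (#U : ℝ)⁻¹ • ∑ u ∈ U, u
    refine ⟨M - ⟪c, p⟫_ℝ, ?_⟩
    rintro _ ⟨x, hxJ, hxJc, rfl⟩
    have hpx : p + x ∈ {x | ∀ i, ⟪A i, x⟫_ℝ ≤ a i} := by
      intro i
      rw [inner_add_right]
      by_cases hi : ∀ v ∈ U, ⟪A i, v⟫_ℝ = a i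
      · linarith [inner_inv_card_smul_sum_eq hUne hi, hxJ i hi]
      · push Not at hi
        obtain ⟨u₀, hu₀, hne⟩ := hi
        have hζu₀ : ζ ≤ a i - ⟪A i, u₀⟫_ℝ :=
          hζ.2 ⟨u₀, hUV hu₀, i, (hUX u₀ hu₀ i).lt_of_ne hne, rfl⟩
        linarith [inner_inv_card_smul_sum_le_sub hu₀ (fun u hu => hUX u hu i) hζu₀,
          hxJc i (fun h => hne (h u₀ hu₀))]
    have hcM : ⟪c, p + x⟫_ℝ ≤ M := hM ⟨_, hpx, rfl⟩
    rw [inner_add_right] at hcM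
    linarith

theorem stmt_8 {n m : ℕ}
    (A : Fin m → EuclideanSpace ℝ (Fin n)) (a : Fin m → ℝ)
    (X : Set (EuclideanSpace ℝ (Fin n)))
    (hX : X = {x | ∀ i, ⟪A i, x⟫_ℝ ≤ a i})
    (hXne : X.Nonempty) (hXc : IsCompact X)
    (V : Set (EuclideanSpace ℝ (Fin n))) (hV : V = Set.extremePoints ℝ X)
    (U : Finset (EuclideanSpace ℝ (Fin n))) (hUne : U.Nonempty) (hUV : ↑U ⊆ V)
    (ζ : ℝ) (hζpos : 0 < ζ)
    (hζ : IsLeast {r | ∃ v ∈ V, ∃ i, ⟪A i, v⟫_ℝ < a i ∧ r = a i - ⟪A i, v⟫_ℝ} ζ)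
    (c z : EuclideanSpace ℝ (Fin n))
    (hz : ∀ i, (∀ v ∈ U, ⟪A i, v⟫_ℝ = a i) → ⟪A i, z⟫_ℝ ≤ 0)
    (hcz : 0 < ⟪c, z⟫_ℝ) :
    (∃ i, ¬(∀ v ∈ U, ⟪A i, v⟫_ℝ = a i) ∧ 0 < ⟪A i, z⟫_ℝ) ∧
      BddAbove {r | ∃ x : EuclideanSpace ℝ (Fin n),
        (∀ i, (∀ v ∈ U, ⟪A i, v⟫_ℝ = a i) → ⟪A i, x⟫_ℝ ≤ 0) ∧
        (∀ i, ¬(∀ v ∈ U, ⟪A i, v⟫_ℝ = a i) → ⟪A i, x⟫_ℝ ≤ ζ / (U.card : ℝ)) ∧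
        r = ⟪c, x⟫_ℝ} :=
  stmt_8_general A a X hX hXc V hV U hUne hUV ζ hζ c z hz hcz
end

section
/- Let X = {x : Ax ≤ a} be a compact polyhedron, U a finite subset of X, and ȳ = (1/|U|)·Σ_{v∈U} v its centroid. Let J = I(U) be the set of indices i with A_i v = a_i for all v ∈ U, and ζ = min{a_j − A_j u : u ∈ ext(X), j with a_j > A_j u} (assumed positive and well-defined). If U ⊆ ext(X), then a_J − A_J ȳ = 0 and a_i − A_i ȳ ≥ ζ/|U| for every i ∉ J. -/
open scoped InnerProductSpace
open Finset

/-!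
The slack `a i - ⟪A i, ·⟫` is affine, so its value at the centroid is the average of its values
on `U`. These values are all nonnegative since `U ⊆ X`; on the indices in `J` they all vanish,
and outside `J` at least one of them is a positive slack at an extreme point, hence at least `ζ`.
-/

theorem sub_inner_centroid_eq_average {E : Type*} [NormedAddCommGroup E] [InnerProductSpace ℝ E]
    {U : Finset E} (hU : U.Nonempty) (w : E) (c : ℝ) :
    c - ⟪w, (#U : ℝ)⁻¹ • ∑ v ∈ U, v⟫_ℝ = (#U : ℝ)⁻¹ * ∑ v ∈ U, (c - ⟪w, v⟫_ℝ) := by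
  have hcard : (#U : ℝ) ≠ 0 := by exact_mod_cast hU.card_pos.ne'
  rw [real_inner_smul_right, inner_sum, sum_sub_distrib, sum_const, nsmul_eq_mul]
  field_simp

theorem stmt_9_general {n m : ℕ}
    (A : Fin m → EuclideanSpace ℝ (Fin n)) (a : Fin m → ℝ)
    (X : Set (EuclideanSpace ℝ (Fin n)))
    (hX : X = {x | ∀ i, ⟪A i, x⟫_ℝ ≤ a i})
    (ζ : ℝ)
    (hζ : IsLeast {r | ∃ v ∈ Set.extremePoints ℝ X, ∃ i,
      ⟪A i, v⟫_ℝ < a i ∧ r = a i - ⟪A i, v⟫_ℝ} ζ)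
    (U : Finset (EuclideanSpace ℝ (Fin n))) (hUne : U.Nonempty)
    (hU : ↑U ⊆ Set.extremePoints ℝ X)
    (ybar : EuclideanSpace ℝ (Fin n))
    (hybar : ybar = ((U.card : ℝ))⁻¹ • ∑ v ∈ U, v) :
    (∀ i, (∀ v ∈ U, ⟪A i, v⟫_ℝ = a i) → a i - ⟪A i, ybar⟫_ℝ = 0) ∧
      (∀ i, ¬(∀ v ∈ U, ⟪A i, v⟫_ℝ = a i) →
        ζ / (U.card : ℝ) ≤ a i - ⟪A i, ybar⟫_ℝ) := by
  subst hybar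
  have hslack : ∀ v ∈ U, ∀ i, 0 ≤ a i - ⟪A i, v⟫_ℝ := fun v hv i => by
    have hvX := (hU hv).1
    rw [hX] at hvX
    exact sub_nonneg.2 (hvX i)
  refine ⟨fun i hJ => ?_, fun i hJ => ?_⟩
  · rw [sub_inner_centroid_eq_average hUne,
      sum_eq_zero fun v hv => sub_eq_zero.2 (hJ v hv).symm, mul_zero]
  · obtain ⟨v₀, hv₀, hne⟩ := not_forall₂.1 hJ
    have hζle : ζ ≤ a i - ⟪A i, v₀⟫_ℝ :=
      hζ.2 ⟨v₀, hU hv₀, i, (sub_nonneg.1 (hslack v₀ hv₀ i)).lt_of_ne hne, rfl⟩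
    rw [sub_inner_centroid_eq_average hUne, div_eq_inv_mul]
    gcongr
    exact hζle.trans (single_le_sum (fun v hv => hslack v hv i) hv₀)

theorem stmt_9 {n m : ℕ}
    (A : Fin m → EuclideanSpace ℝ (Fin n)) (a : Fin m → ℝ)
    (X : Set (EuclideanSpace ℝ (Fin n)))
    (hX : X = {x | ∀ i, ⟪A i, x⟫_ℝ ≤ a i})
    (hXne : X.Nonempty) (hXc : IsCompact X)
    (ζ : ℝ) (hζpos : 0 < ζ)
    (hζ : IsLeast {r | ∃ v ∈ Set.extremePoints ℝ X, ∃ i,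
      ⟪A i, v⟫_ℝ < a i ∧ r = a i - ⟪A i, v⟫_ℝ} ζ)
    (U : Finset (EuclideanSpace ℝ (Fin n))) (hUne : U.Nonempty)
    (hU : ↑U ⊆ Set.extremePoints ℝ X)
    (ybar : EuclideanSpace ℝ (Fin n))
    (hybar : ybar = ((U.card : ℝ))⁻¹ • ∑ v ∈ U, v) :
    (∀ i, (∀ v ∈ U, ⟪A i, v⟫_ℝ = a i) → a i - ⟪A i, ybar⟫_ℝ = 0) ∧
      (∀ i, ¬(∀ v ∈ U, ⟪A i, v⟫_ℝ = a i) →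
        ζ / (U.card : ℝ) ≤ a i - ⟪A i, ybar⟫_ℝ) :=
  stmt_9_general A a X hX ζ hζ U hUne hU ybar hybar
end

section
/- Let X = {x : Ax ≤ a} be a compact polyhedron with vertex set V, f convex and differentiable on ℝⁿ with optimal set X* = argmin_X f, and Ω_X the vertex-facet distance constant of X. Let x ∈ X \ X* with x = Σ_{v∈U} μ_v v, where U ⊆ V and μ_v > 0, Σ μ_v = 1. Then max_{u∈U, p∈V} ⟨∇f(x), u − p⟩ ≥ (Ω_X/|U|) · max_{x*∈X*} ⟨∇f(x), x − x*⟩ / ‖x − x*‖. -/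
/-!
Let `c` be the centroid of `U` and `y = c + t (x* - x)` with `t = Ω_X / (|U| ‖x - x*‖)`. A constraint
active on every vertex of `U` is active at `x`, so moving along `x* - x` keeps it satisfied; any other
constraint is slack at some vertex of `U` by at least `ζ`, hence at `c` by at least `ζ / |U|`, which
bounds its change `t ⟪A i, x* - x⟫ ≤ t φ ‖x - x*‖`. So `y ∈ X`. If the vertex `p` minimises
`⟪∇f(x), ·⟫` on `X` and `u ∈ U` satisfies `⟪∇f(x), c⟫ ≤ ⟪∇f(x), u⟫`, then
`⟪∇f(x), u - p⟫ ≥ ⟪∇f(x), c - y⟫ = t ⟪∇f(x), x - x*⟫`.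
-/

open scoped InnerProductSpace
open Finset

lemma IsCompact.exists_mem_extremePoints_isMinOn {E : Type*} [AddCommGroup E] [Module ℝ E]
    [TopologicalSpace E] [T2Space E] [IsTopologicalAddGroup E] [ContinuousSMul ℝ E]
    [LocallyConvexSpace ℝ E] {X : Set E} (hXc : IsCompact X) (hne : X.Nonempty)
    (l : E →L[ℝ] ℝ) : ∃ p ∈ Set.extremePoints ℝ X, IsMinOn l X p := by
  have hexp : IsExposed ℝ X ((-l).toExposed X) := ContinuousLinearMap.toExposed.isExposed
  obtain ⟨z, hzX, hz⟩ := hXc.exists_isMinOn hne l.continuous.continuousOn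
  obtain ⟨p, hp⟩ := (hexp.isCompact hXc).extremePoints_nonempty
    ⟨z, hzX, fun y hy => by simpa using hz hy⟩
  refine ⟨p, hexp.isExtreme.extremePoints_subset_extremePoints hp, fun q hq => ?_⟩
  simpa using (extremePoints_subset hp).2 q hq

lemma Finset.centroid_id_eq_sum_smul {E : Type*} [AddCommGroup E] [Module ℝ E] {U : Finset E}
    (hU : U.Nonempty) : U.centroid ℝ id = ∑ v ∈ U, (#U : ℝ)⁻¹ • v := by
  rw [centroid_def, affineCombination_eq_linear_combination _ _ _
    (sum_centroidWeights_eq_one_of_nonempty ℝ _ hU)]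
  simp [centroidWeights_apply]

lemma Finset.inv_card_mul_sum_le_sub_div {ι : Type*} {s : Finset ι} {f : ι → ℝ} {b ζ : ℝ}
    (hf : ∀ i ∈ s, f i ≤ b) {j : ι} (hj : j ∈ s) (hfj : f j ≤ b - ζ) :
    (#s : ℝ)⁻¹ * ∑ i ∈ s, f i ≤ b - ζ / #s := by
  classical
  have hsum : ∑ i ∈ s, f i ≤ #s * b - ζ := by
    calc ∑ i ∈ s, f i ≤ ∑ i ∈ s, (b - if i = j then ζ else 0) :=
          sum_le_sum fun i hi => by split_ifs with h <;> [exact h ▸ hfj; simpa using hf i hi]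
      _ = #s * b - ζ := by simp [sum_sub_distrib, hj]
  have hcard : (0 : ℝ) < #s := by exact_mod_cast card_pos.mpr ⟨j, hj⟩
  rw [inv_mul_le_iff₀ hcard]
  calc ∑ i ∈ s, f i ≤ #s * b - ζ := hsum
    _ = #s * (b - ζ / #s) := by field_simp

section Polyhedron

variable {E ι : Type*} [NormedAddCommGroup E] [InnerProductSpace ℝ E]

lemma inner_sum_smul_of_forall_inner_eq {U : Finset E} {w : E} {b : ℝ} {μ : E → ℝ}
    (hw : ∀ v ∈ U, ⟪w, v⟫_ℝ = b) (hμ : ∑ v ∈ U, μ v = 1) :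
    ⟪w, ∑ v ∈ U, μ v • v⟫_ℝ = b := by
  simp only [inner_sum, real_inner_smul_right]
  rw [sum_congr rfl fun v hv => by rw [hw v hv], ← sum_mul, hμ, one_mul]

lemma inner_centroid_le_sub_div {U : Finset E} {w : E} {b ζ : ℝ}
    (hw : ∀ v ∈ U, ⟪w, v⟫_ℝ ≤ b) {v₀ : E} (hv₀ : v₀ ∈ U) (hζ : ζ ≤ b - ⟪w, v₀⟫_ℝ) :
    ⟪w, U.centroid ℝ id⟫_ℝ ≤ b - ζ / #U := by
  rw [centroid_id_eq_sum_smul ⟨v₀, hv₀⟩]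
  simp only [inner_sum, real_inner_smul_right, ← mul_sum]
  exact inv_card_mul_sum_le_sub_div hw hv₀ (by linarith)

lemma exists_inner_centroid_le {U : Finset E} (hU : U.Nonempty) (g : E) :
    ∃ u ∈ U, ⟪g, U.centroid ℝ id⟫_ℝ ≤ ⟪g, u⟫_ℝ := by
  refine exists_le_of_sum_le hU ?_
  rw [sum_const, nsmul_eq_mul, centroid_id_eq_sum_smul hU]
  simp only [inner_sum, real_inner_smul_right, ← mul_sum]
  rw [mul_inv_cancel_left₀ (by exact_mod_cast hU.card_pos.ne')]

theorem centroid_add_smul_mem_polyhedron {A : ι → E} {a : ι → ℝ} {ζ φ : ℝ} {U : Finset E}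
    (hU : U.Nonempty) (hUX : ∀ v ∈ U, ∀ i, ⟪A i, v⟫_ℝ ≤ a i)
    (hζ : ∀ v ∈ U, ∀ i, ⟪A i, v⟫_ℝ < a i → ζ ≤ a i - ⟪A i, v⟫_ℝ)
    (hφ : ∀ i, (∃ v ∈ U, ⟪A i, v⟫_ℝ < a i) → ‖A i‖ ≤ φ)
    {μ : E → ℝ} (hμ : ∑ v ∈ U, μ v = 1) {x xstar : E} (hx : x = ∑ v ∈ U, μ v • v)
    (hxstar : ∀ i, ⟪A i, xstar⟫_ℝ ≤ a i) {t : ℝ} (ht : 0 ≤ t)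
    (htφ : t * (φ * ‖x - xstar‖) ≤ ζ / #U) (i : ι) :
    ⟪A i, U.centroid ℝ id + t • (xstar - x)⟫_ℝ ≤ a i := by
  rw [inner_add_right, real_inner_smul_right]
  by_cases hact : ∀ v ∈ U, ⟪A i, v⟫_ℝ = a i
  · have hcentroid : ⟪A i, U.centroid ℝ id⟫_ℝ = a i := by
      rw [centroid_id_eq_sum_smul hU]
      exact inner_sum_smul_of_forall_inner_eq hact (by simp [hU.card_pos.ne'])
    have hxi : ⟪A i, x⟫_ℝ = a i := hx ▸ inner_sum_smul_of_forall_inner_eq hact hμ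
    have hdir : ⟪A i, xstar - x⟫_ℝ ≤ 0 := by
      rw [inner_sub_right, hxi]
      linarith [hxstar i]
    nlinarith
  · push Not at hact
    obtain ⟨v₀, hv₀, hv₀i⟩ := hact
    have hslack : ⟪A i, v₀⟫_ℝ < a i := lt_of_le_of_ne (hUX v₀ hv₀ i) hv₀i
    have hcentroid := inner_centroid_le_sub_div (fun v hv => hUX v hv i) hv₀
      (hζ v₀ hv₀ i hslack)
    have hdir : ⟪A i, xstar - x⟫_ℝ ≤ φ * ‖x - xstar‖ :=
      calc ⟪A i, xstar - x⟫_ℝ ≤ ‖A i‖ * ‖xstar - x‖ := real_inner_le_norm _ _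
        _ ≤ φ * ‖x - xstar‖ := by
          rw [norm_sub_rev]
          exact mul_le_mul_of_nonneg_right (hφ i ⟨v₀, hv₀, hslack⟩) (norm_nonneg _)
    nlinarith [mul_le_mul_of_nonneg_left hdir ht]

lemma exists_mul_inner_le_inner_sub {U : Finset E} (hU : U.Nonempty) {g x xstar p : E} {t : ℝ}
    (hp : ⟪g, p⟫_ℝ ≤ ⟪g, U.centroid ℝ id + t • (xstar - x)⟫_ℝ) :
    ∃ u ∈ U, t * ⟪g, x - xstar⟫_ℝ ≤ ⟪g, u - p⟫_ℝ := by
  obtain ⟨u, hu, hgu⟩ := exists_inner_centroid_le hU g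
  refine ⟨u, hu, ?_⟩
  rw [inner_add_right, real_inner_smul_right, inner_sub_right] at hp
  rw [inner_sub_right, inner_sub_right]
  linarith

end Polyhedron

theorem stmt_11_general {n m : ℕ}
    (A : Fin m → EuclideanSpace ℝ (Fin n)) (a : Fin m → ℝ)
    (X : Set (EuclideanSpace ℝ (Fin n)))
    (hX : X = {x | ∀ i, ⟪A i, x⟫_ℝ ≤ a i})
    (hXc : IsCompact X)
    (V : Set (EuclideanSpace ℝ (Fin n))) (hV : V = Set.extremePoints ℝ X)
    (f : EuclideanSpace ℝ (Fin n) → ℝ)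
    (Xstar : Set (EuclideanSpace ℝ (Fin n)))
    (hXstar : Xstar = {y ∈ X | ∀ z ∈ X, f y ≤ f z})
    (ζ φ : ℝ)
    (hζ : IsLeast {r | ∃ v ∈ V, ∃ i, ⟪A i, v⟫_ℝ < a i ∧ r = a i - ⟪A i, v⟫_ℝ} ζ)
    (hφ : IsGreatest {r | ∃ i, ¬(∀ v ∈ V, ⟪A i, v⟫_ℝ = a i) ∧ r = ‖A i‖} φ)
    (x : EuclideanSpace ℝ (Fin n))
    (U : Finset (EuclideanSpace ℝ (Fin n))) (hUne : U.Nonempty) (hUV : ↑U ⊆ V)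
    (μ : EuclideanSpace ℝ (Fin n) → ℝ)
    (hμ1 : ∑ v ∈ U, μ v = 1)
    (hx : x = ∑ v ∈ U, μ v • v) :
    ∀ xstar ∈ Xstar, ∃ u ∈ U, ∃ p ∈ V,
      ζ / φ / (U.card : ℝ) *
          (⟪gradient f x, x - xstar⟫_ℝ / ‖x - xstar‖) ≤
        ⟪gradient f x, u - p⟫_ℝ := by
  intro xstar hxstar
  subst hX hV hXstar
  have hUX : ∀ v ∈ U, ∀ i, ⟪A i, v⟫_ℝ ≤ a i := fun v hv => extremePoints_subset (hUV hv)
  have hζ0 : 0 ≤ ζ := by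
    obtain ⟨v, -, i, hvi, rfl⟩ := hζ.1
    linarith
  have hφ0 : 0 ≤ φ := by
    obtain ⟨i, -, rfl⟩ := hφ.1
    positivity
  obtain ⟨p, hpV, hpmin⟩ := hXc.exists_mem_extremePoints_isMinOn
    (hUne.to_set.mono (hUV.trans extremePoints_subset)) (innerSL ℝ (gradient f x))
  set t := ζ / #U / (φ * ‖x - xstar‖)
  -- only `≤`: when `φ * ‖x - xstar‖ = 0`, division by zero makes `t = 0`
  have htφ : t * (φ * ‖x - xstar‖) ≤ ζ / #U := by
    rw [div_mul_eq_mul_div, mul_div_assoc]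
    exact mul_le_of_le_one_right (by positivity) (div_self_le_one _)
  have hy := centroid_add_smul_mem_polyhedron hUne hUX
    (fun v hv i hvi => hζ.2 ⟨v, hUV hv, i, hvi, rfl⟩)
    (fun i ⟨v, hv, hvi⟩ => hφ.2 ⟨i, fun h => hvi.ne (h v (hUV hv)), rfl⟩)
    hμ1 hx hxstar.1 (by positivity) htφ
  obtain ⟨u, hu, hle⟩ := exists_mul_inner_le_inner_sub hUne (hpmin hy)
  refine ⟨u, hu, p, hpV, ?_⟩
  calc ζ / φ / #U * (⟪gradient f x, x - xstar⟫_ℝ / ‖x - xstar‖)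
      = t * ⟪gradient f x, x - xstar⟫_ℝ := by ring
    _ ≤ ⟪gradient f x, u - p⟫_ℝ := hle

theorem stmt_11 {n m : ℕ}
    (A : Fin m → EuclideanSpace ℝ (Fin n)) (a : Fin m → ℝ)
    (X : Set (EuclideanSpace ℝ (Fin n)))
    (hX : X = {x | ∀ i, ⟪A i, x⟫_ℝ ≤ a i})
    (hXne : X.Nonempty) (hXc : IsCompact X)
    (V : Set (EuclideanSpace ℝ (Fin n))) (hV : V = Set.extremePoints ℝ X)
    (f : EuclideanSpace ℝ (Fin n) → ℝ)
    (hfconv : ConvexOn ℝ Set.univ f) (hfdiff : Differentiable ℝ f)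
    (Xstar : Set (EuclideanSpace ℝ (Fin n)))
    (hXstar : Xstar = {y ∈ X | ∀ z ∈ X, f y ≤ f z})
    (ζ φ : ℝ)
    (hζ : IsLeast {r | ∃ v ∈ V, ∃ i, ⟪A i, v⟫_ℝ < a i ∧ r = a i - ⟪A i, v⟫_ℝ} ζ)
    (hφ : IsGreatest {r | ∃ i, ¬(∀ v ∈ V, ⟪A i, v⟫_ℝ = a i) ∧ r = ‖A i‖} φ)
    (x : EuclideanSpace ℝ (Fin n)) (hxX : x ∈ X) (hxns : x ∉ Xstar)
    (U : Finset (EuclideanSpace ℝ (Fin n))) (hUne : U.Nonempty) (hUV : ↑U ⊆ V)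
    (μ : EuclideanSpace ℝ (Fin n) → ℝ)
    (hμpos : ∀ v ∈ U, 0 < μ v) (hμ1 : ∑ v ∈ U, μ v = 1)
    (hx : x = ∑ v ∈ U, μ v • v) :
    ∀ xstar ∈ Xstar, ∃ u ∈ U, ∃ p ∈ V,
      ζ / φ / (U.card : ℝ) *
          (⟪gradient f x, x - xstar⟫_ℝ / ‖x - xstar‖) ≤
        ⟪gradient f x, u - p⟫_ℝ :=
  stmt_11_general A a X hX hXc V hV f Xstar hXstar ζ φ hζ hφ x U hUne hUV μ hμ1 hx
end

section
/- Let f : ℝⁿ → ℝ be differentiable with ρ-Lipschitz continuous gradient, x ∈ ℝⁿ, d ≠ 0 with ⟨∇f(x), d⟩ < 0, γ̄ > 0, and γ = min(−⟨∇f(x), d⟩/(ρ‖d‖²), γ̄). If γ < γ̄, then f(x + γd) ≤ f(x) − ⟨∇f(x), d⟩²/(2ρ‖d‖²). If γ = γ̄, then f(x + γd) ≤ f(x) + (γ̄/2)·⟨∇f(x), d⟩. -/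
/-!
Along the segment from `x` to `y`, the Lipschitz bound on the gradient makes
`t ↦ f (x + t • (y - x)) - t ⟪∇f x, y - x⟫ - (ρ/2) t² ‖y - x‖²` antitone, which gives the descent
lemma `f y ≤ f x + ⟪∇f x, y - x⟫ + (ρ/2) ‖y - x‖²`. At `y = x + γ d` its right-hand side is the
quadratic `f x + γ b + (c/2) γ²` in `γ`, with `b = ⟪∇f x, d⟫` and `c = ρ ‖d‖²`. When `γ < γ̄` the
stepsize is its minimiser `-b / c`, with minimum value `f x - b² / (2c)`; when `γ = γ̄ ≤ -b / c`
we have `c γ̄ ≤ -b`, so `(c/2) γ̄² ≤ -(γ̄/2) b`.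
-/

open scoped InnerProductSpace

section DescentLemma

variable {E : Type*} [NormedAddCommGroup E] [InnerProductSpace ℝ E] [CompleteSpace E]
  {f : E → ℝ}

theorem hasDerivAt_apply_add_smul {x d : E} {t : ℝ} (hf : DifferentiableAt ℝ f (x + t • d)) :
    HasDerivAt (fun s : ℝ => f (x + s • d)) ⟪gradient f (x + t • d), d⟫_ℝ t := by
  have hline : HasDerivAt (fun s : ℝ => x + s • d) d t := by
    simpa using ((hasDerivAt_id t).smul_const d).const_add x
  exact hf.hasGradientAt.hasFDerivAt.comp_hasDerivAt t hline

theorem le_add_inner_gradient_add_of_lipschitz_gradient {ρ : ℝ} (hf : Differentiable ℝ f)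
    (hlip : ∀ y z, ‖gradient f y - gradient f z‖ ≤ ρ * ‖y - z‖) (x y : E) :
    f y ≤ f x + ⟪gradient f x, y - x⟫_ℝ + ρ / 2 * ‖y - x‖ ^ 2 := by
  set d := y - x
  set ψ : ℝ → ℝ := fun t => f (x + t • d) - t * ⟪gradient f x, d⟫_ℝ - ρ / 2 * ‖d‖ ^ 2 * t ^ 2
  have hψ : ∀ t, HasDerivAt ψ
      (⟪gradient f (x + t • d) - gradient f x, d⟫_ℝ - ρ * ‖d‖ ^ 2 * t) t := by
    intro t
    refine (((hasDerivAt_apply_add_smul (hf (x + t • d))).sub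
      ((hasDerivAt_id t).mul_const ⟪gradient f x, d⟫_ℝ)).sub
      ((hasDerivAt_pow 2 t).const_mul (ρ / 2 * ‖d‖ ^ 2))).congr_deriv ?_
    rw [inner_sub_left]
    ring
  have hgrowth : ∀ t, 0 ≤ t →
      ⟪gradient f (x + t • d) - gradient f x, d⟫_ℝ ≤ ρ * ‖d‖ ^ 2 * t := fun t ht =>
    calc ⟪gradient f (x + t • d) - gradient f x, d⟫_ℝ
        ≤ ‖gradient f (x + t • d) - gradient f x‖ * ‖d‖ := real_inner_le_norm _ _
      _ ≤ ρ * ‖x + t • d - x‖ * ‖d‖ := by gcongr; exact hlip _ _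
      _ = ρ * ‖d‖ ^ 2 * t := by
        rw [add_sub_cancel_left, norm_smul, Real.norm_of_nonneg ht]; ring
  have hanti : AntitoneOn ψ (Set.Icc 0 1) :=
    antitoneOn_of_hasDerivWithinAt_nonpos (convex_Icc 0 1)
      (HasDerivAt.continuousOn fun t _ => hψ t) (fun t _ => (hψ t).hasDerivWithinAt)
      (fun t ht => by
        rw [interior_Icc] at ht
        linarith [hgrowth t ht.1.le])
  have h10 : ψ 1 ≤ ψ 0 := hanti (by simp) (by simp) zero_le_one
  simp only [ψ, one_smul, zero_smul, add_zero, d, add_sub_cancel] at h10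
  linarith

end DescentLemma

theorem stmt_14_general {n : ℕ}
    (f : EuclideanSpace ℝ (Fin n) → ℝ) (hfdiff : Differentiable ℝ f)
    (ρ : ℝ) (hρ : 0 < ρ)
    (hlip : ∀ y z : EuclideanSpace ℝ (Fin n),
      ‖gradient f y - gradient f z‖ ≤ ρ * ‖y - z‖)
    (x d : EuclideanSpace ℝ (Fin n))
    (γbar : ℝ) (hγbar : 0 < γbar)
    (γ : ℝ) (hγ : γ = min (-⟪gradient f x, d⟫_ℝ / (ρ * ‖d‖ ^ 2)) γbar) :
    (γ < γbar →
      f (x + γ • d) ≤ f x - ⟪gradient f x, d⟫_ℝ ^ 2 / (2 * ρ * ‖d‖ ^ 2)) ∧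
    (γ = γbar →
      f (x + γ • d) ≤ f x + γbar / 2 * ⟪gradient f x, d⟫_ℝ) := by
  set b := ⟪gradient f x, d⟫_ℝ
  set c := ρ * ‖d‖ ^ 2 with hc
  have hdesc : f (x + γ • d) ≤ f x + γ * b + c / 2 * γ ^ 2 := by
    have := le_add_inner_gradient_add_of_lipschitz_gradient hfdiff hlip x (x + γ • d)
    rw [add_sub_cancel_left, inner_smul_right, norm_smul, Real.norm_eq_abs, mul_pow, sq_abs]
      at this
    linarith
  constructor
  · intro hlt
    have hγ' : γ = -b / c := by
      rw [hγ] at hlt ⊢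
      exact min_eq_left ((min_lt_iff.1 hlt).resolve_right (lt_irrefl _)).le
    have hval : γ * b + c / 2 * γ ^ 2 = -(b ^ 2 / (2 * ρ * ‖d‖ ^ 2)) := by
      rw [hγ', mul_assoc 2, ← hc]
      -- for `c = 0` both sides vanish, because `-b / 0 = 0` in Lean
      rcases eq_or_ne c 0 with hc0 | hc0
      · simp [hc0]
      · field_simp
        ring
    linarith
  · rintro rfl
    have hle : γ ≤ -b / c := hγ ▸ min_le_left _ _
    have hcpos : 0 < c := by
      have : 0 < -b / c := hγbar.trans_le hle
      exact (div_pos_iff.1 this).elim (·.2) fun h => absurd h.2 (not_lt.2 (by positivity))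
    have hstep : c * γ ≤ -b := by rw [mul_comm]; exact (le_div_iff₀ hcpos).1 hle
    linarith [mul_le_mul_of_nonneg_left hstep hγbar.le]

theorem stmt_14 {n : ℕ}
    (f : EuclideanSpace ℝ (Fin n) → ℝ) (hfdiff : Differentiable ℝ f)
    (ρ : ℝ) (hρ : 0 < ρ)
    (hlip : ∀ y z : EuclideanSpace ℝ (Fin n),
      ‖gradient f y - gradient f z‖ ≤ ρ * ‖y - z‖)
    (x d : EuclideanSpace ℝ (Fin n)) (hd : d ≠ 0)
    (hneg : ⟪gradient f x, d⟫_ℝ < 0)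
    (γbar : ℝ) (hγbar : 0 < γbar)
    (γ : ℝ) (hγ : γ = min (-⟪gradient f x, d⟫_ℝ / (ρ * ‖d‖ ^ 2)) γbar) :
    (γ < γbar →
      f (x + γ • d) ≤ f x - ⟪gradient f x, d⟫_ℝ ^ 2 / (2 * ρ * ‖d‖ ^ 2)) ∧
    (γ = γbar →
      f (x + γ • d) ≤ f x + γbar / 2 * ⟪gradient f x, d⟫_ℝ) :=
  stmt_14_general f hfdiff ρ hρ hlip x d γbar hγbar γ hγ
end
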